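/- Let δ ≥ 2, t ≥ δ + 1, and let G be a graph on n vertices with minimum degree at least δ. If i_t(G) ≤ C(n-δ, t), then i_{t+1}(G) ≤ C(n-δ, t+1). Moreover, if in addition t < n − δ and i_t(G) < C(n-δ, t), then i_{t+1}(G) < C(n-δ, t+1). -/

import Mathlib

/-!
Double count the pairs `S ⊆ T` of independent sets with `#S = t` and `#T = t + 1`. Each `T`
contains `t + 1` such `S`. Each `S` extends only by a vertex outside `S` and outside the
neighbourhood of some fixed `u ∈ S`, a set disjoint from `S` of size at least `δ`; so it has at
most `n - δ - t` extensions. Hence `(t + 1) i_{t+1} ≤ (n - δ - t) i_t`, and since binomial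
coefficients satisfy this with equality, `(t + 1) C(m, t+1) = (m - t) C(m, t)`, both bounds
pass from `t` to `t + 1`.
-/

open SimpleGraph

/-- `indepT G t` is the number of independent sets of size `t` in `G`,
i.e. the number of `t`-element vertex subsets spanning no edge. -/
noncomputable def indepT {V : Type*} [Fintype V] (G : SimpleGraph V) (t : ℕ) : ℕ :=
  Nat.card {s : Finset V // s.card = t ∧ ∀ u ∈ s, ∀ v ∈ s, ¬ G.Adj u v}

/-- `indepAll G` is the total number of independent sets in `G` (including `∅`). -/
noncomputable def indepAll {V : Type*} [Fintype V] (G : SimpleGraph V) : ℕ :=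
  Nat.card {s : Finset V // ∀ u ∈ s, ∀ v ∈ s, ¬ G.Adj u v}

/-- The degree of a vertex, as the cardinality of its neighbour set. -/
noncomputable def gdeg {V : Type*} (G : SimpleGraph V) (v : V) : ℕ :=
  (G.neighborSet v).ncard

open Finset

namespace SimpleGraph

variable {V : Type*} [Fintype V] [DecidableEq V] (G : SimpleGraph V) [DecidableRel G.Adj]

def indepSetsOfCard (k : ℕ) : Finset (Finset V) :=
  {s | #s = k ∧ ∀ u ∈ s, ∀ v ∈ s, ¬ G.Adj u v}

variable {G}

theorem mem_indepSetsOfCard {k : ℕ} {s : Finset V} :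
    s ∈ G.indepSetsOfCard k ↔ #s = k ∧ ∀ u ∈ s, ∀ v ∈ s, ¬ G.Adj u v := by
  simp [indepSetsOfCard]

theorem indepT_eq_card_indepSetsOfCard (k : ℕ) : indepT G k = #(G.indepSetsOfCard k) := by
  rw [indepT, Nat.card_eq_fintype_card, Fintype.card_subtype, indepSetsOfCard]

omit [DecidableEq V] in
theorem gdeg_eq_degree (v : V) : gdeg G v = G.degree v := by
  rw [gdeg, Set.ncard_eq_toFinset_card', ← card_neighborFinset_eq_degree, neighborFinset]

theorem succ_le_card_indepSetsOfCard_subset {t : ℕ} {T : Finset V}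
    (hT : T ∈ G.indepSetsOfCard (t + 1)) :
    t + 1 ≤ #{S ∈ G.indepSetsOfCard t | S ⊆ T} := by
  obtain ⟨hcard, hind⟩ := mem_indepSetsOfCard.1 hT
  calc t + 1 = #(T.powersetCard t) := by simp [hcard]
    _ ≤ _ := card_le_card fun S hS => by
      obtain ⟨hST, hScard⟩ := mem_powersetCard.1 hS
      exact mem_filter.2 ⟨mem_indepSetsOfCard.2
        ⟨hScard, fun u hu v hv => hind u (hST hu) v (hST hv)⟩, hST⟩

theorem card_indepSetsOfCard_superset_le {δ t : ℕ} (ht : 1 ≤ t) (hmin : ∀ v, δ ≤ G.degree v)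
    {S : Finset V} (hS : S ∈ G.indepSetsOfCard t) :
    #{T ∈ G.indepSetsOfCard (t + 1) | S ⊆ T} ≤ Fintype.card V - δ - t := by
  obtain ⟨hcard, hind⟩ := mem_indepSetsOfCard.1 hS
  obtain ⟨u, hu⟩ : S.Nonempty := card_pos.1 (by omega)
  have hsupersets : {T ∈ G.indepSetsOfCard (t + 1) | S ⊆ T} ⊆
      (univ \ (S ∪ G.neighborFinset u)).image (insert · S) := by
    intro T hT
    obtain ⟨hT, hST⟩ := mem_filter.1 hT
    obtain ⟨hTcard, hTind⟩ := mem_indepSetsOfCard.1 hT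
    obtain ⟨v, hvS, rfl⟩ := exists_eq_insert_iff.2 ⟨hST, by omega⟩
    refine mem_image.2 ⟨v, ?_, rfl⟩
    simp only [mem_sdiff, mem_univ, mem_union, mem_neighborFinset, true_and, not_or]
    exact ⟨hvS, hTind u (mem_insert_of_mem hu) v (mem_insert_self v S)⟩
  have hdisj : Disjoint S (G.neighborFinset u) :=
    Finset.disjoint_left.2 fun w hw hwu => hind u hu w hw ((mem_neighborFinset _ _ _).1 hwu)
  calc _ ≤ #((univ \ (S ∪ G.neighborFinset u)).image (insert · S)) := card_le_card hsupersets
    _ ≤ #(univ \ (S ∪ G.neighborFinset u)) := card_image_le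
    _ = Fintype.card V - (t + G.degree u) := by
      rw [card_univ_sdiff, card_union_of_disjoint hdisj, hcard, card_neighborFinset_eq_degree]
    _ ≤ Fintype.card V - δ - t := by have := hmin u; omega

theorem succ_mul_indepT_succ_le {δ t : ℕ} (ht : 1 ≤ t) (hmin : ∀ v, δ ≤ G.degree v) :
    (t + 1) * indepT G (t + 1) ≤ (Fintype.card V - δ - t) * indepT G t := by
  rw [indepT_eq_card_indepSetsOfCard, indepT_eq_card_indepSetsOfCard, mul_comm, mul_comm _ #_]
  exact card_mul_le_card_mul (fun T S : Finset V => S ⊆ T)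
    (fun _ hT => succ_le_card_indepSetsOfCard_subset hT)
    (fun _ hS => card_indepSetsOfCard_superset_le ht hmin hS)

end SimpleGraph

namespace Nat

theorem le_choose_succ_of_succ_mul_le {m t a b : ℕ} (h : (t + 1) * b ≤ (m - t) * a)
    (ha : a ≤ m.choose t) : b ≤ m.choose (t + 1) := by
  refine Nat.le_of_mul_le_mul_left ?_ t.succ_pos
  calc (t + 1) * b ≤ (m - t) * a := h
    _ ≤ (m - t) * m.choose t := Nat.mul_le_mul_left _ ha
    _ = (t + 1) * m.choose (t + 1) := by rw [mul_comm, ← choose_succ_right_eq, mul_comm]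

theorem lt_choose_succ_of_succ_mul_le {m t a b : ℕ} (h : (t + 1) * b ≤ (m - t) * a)
    (htm : t < m) (ha : a < m.choose t) : b < m.choose (t + 1) := by
  refine Nat.lt_of_mul_lt_mul_left (a := t + 1) ?_
  calc (t + 1) * b ≤ (m - t) * a := h
    _ < (m - t) * m.choose t := Nat.mul_lt_mul_of_pos_left ha (Nat.sub_pos_of_lt htm)
    _ = (t + 1) * m.choose (t + 1) := by rw [mul_comm, ← choose_succ_right_eq, mul_comm]

end Nat

theorem stmt_11_general {V : Type*} [Fintype V] (G : SimpleGraph V) (δ n t : ℕ)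
    (ht : δ + 1 ≤ t) (hn : Fintype.card V = n)
    (hmin : ∀ v, δ ≤ gdeg G v) :
    (indepT G t ≤ (n - δ).choose t → indepT G (t + 1) ≤ (n - δ).choose (t + 1)) ∧
    (t < n - δ → indepT G t < (n - δ).choose t →
      indepT G (t + 1) < (n - δ).choose (t + 1)) := by
  classical
  have hdeg : ∀ v, δ ≤ G.degree v := fun v => gdeg_eq_degree (G := G) v ▸ hmin v
  have hcount := succ_mul_indepT_succ_le (t := t) (by omega) hdeg
  rw [hn] at hcount
  exact ⟨Nat.le_choose_succ_of_succ_mul_le hcount, Nat.lt_choose_succ_of_succ_mul_le hcount⟩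

/-- For `δ ≥ 2`, `t ≥ δ+1` and an `n`-vertex graph `G` of minimum degree at least `δ`:
if `i_t(G) ≤ C(n-δ,t)` then `i_{t+1}(G) ≤ C(n-δ,t+1)`; and if moreover `t < n-δ` and
`i_t(G) < C(n-δ,t)` then `i_{t+1}(G) < C(n-δ,t+1)`. -/
theorem stmt_11 {V : Type*} [Fintype V] (G : SimpleGraph V) (δ n t : ℕ)
    (hδ : 2 ≤ δ) (ht : δ + 1 ≤ t) (hn : Fintype.card V = n)
    (hmin : ∀ v, δ ≤ gdeg G v) :
    (indepT G t ≤ (n - δ).choose t → indepT G (t + 1) ≤ (n - δ).choose (t + 1)) ∧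
    (t < n - δ → indepT G t < (n - δ).choose t →
      indepT G (t + 1) < (n - δ).choose (t + 1)) :=
  stmt_11_general G δ n t ht hn hmin
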